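/- arXiv:1109.0748 — 2 statements merged into one kernel-verified Lean document; each statement's English description precedes it below -/
import Mathlib

section
/- Let n be a positive integer and let a : ZMod (4n) → ℤ take only the values 1 and −1, such that the circulant matrix H with H i j = a (j − i) satisfies H * Hᵀ = (4n : ℤ) • 1. Then for every t : ZMod (4n) with t ≠ 0 and t ≠ 2n, the cardinality of the set { i : ZMod (4n) | a i ≠ a (i + 2n) ∧ a (i + t) ≠ a (i + t + 2n) } is divisible by 4. -/
/-!
Put `c = 2n` and `d i = a i - a (i + c)`. Expanding, the autocorrelation of `d` at `t` is
`2 R(t) - R(t + c) - R(t - c)` in terms of the autocorrelation `R` of `a`, which vanishes off `0`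
by the Hadamard property; so it is `0` for `t ≠ 0, c`. Each term `d i * d (i + t)` is `0` off the
set `O` of the statement and `4 a i a (i + t)` on it, so the signs `a i a (i + t)` sum to `0` over
`O`. Since `i ↦ i + c` is a fixed-point-free involution of `O` preserving these signs, the terms
`1 + a i a (i + t) ∈ {0, 2}` of `#O = ∑_O (1 + a i a (i + t))` pair up into multiples of `4`.
-/

open Matrix Finset

section Autocorrelation

variable {G R : Type*} [AddCommGroup G] [Fintype G] [CommRing R]

def autocorrelation (a : G → R) (s : G) : R :=
  ∑ k, a k * a (k + s)

theorem sum_shift_mul_shift (a : G → R) (c s : G) :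
    ∑ k, a (k + c) * a (k + s) = autocorrelation a (s - c) := by
  unfold autocorrelation
  simpa only [Equiv.coe_addRight, add_assoc, add_sub_cancel] using
    Equiv.sum_comp (Equiv.addRight c) fun k => a k * a (k + (s - c))

theorem autocorrelation_sub_shift (a : G → R) (c t : G) :
    autocorrelation (fun i => a i - a (i + c)) t =
      2 * autocorrelation a t - autocorrelation a (t + c) - autocorrelation a (t - c) := by
  have h₁ : ∑ k, a k * a (k + t + c) = autocorrelation a (t + c) := by
    simp only [autocorrelation, add_assoc]
  have h₂ := sum_shift_mul_shift a c t
  have h₃ : ∑ k, a (k + c) * a (k + t + c) = autocorrelation a t := by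
    simpa only [add_sub_cancel_right, add_assoc] using sum_shift_mul_shift a c (t + c)
  rw [autocorrelation]
  simp only [sub_mul, mul_sub, sum_sub_distrib]
  rw [h₁, h₂, h₃, ← autocorrelation]
  ring

theorem autocorrelation_eq_zero_of_mul_transpose_eq_smul_one [DecidableEq G] (a : G → R)
    (H : Matrix G G R) (hH : ∀ i j, H i j = a (j - i)) (m : R) (hHad : H * Hᵀ = m • 1)
    {s : G} (hs : s ≠ 0) : autocorrelation a s = 0 := by
  have h := congrFun (congrFun hHad 0) (-s)
  simp only [mul_apply, transpose_apply, hH, sub_zero, sub_neg_eq_add] at h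
  simpa [autocorrelation, one_apply, hs] using h

end Autocorrelation

theorem four_dvd_card_of_sum_eq_zero_of_involution {α : Type*} {s : Finset α} (σ : α → ℤ)
    (hσ : ∀ x ∈ s, σ x = 1 ∨ σ x = -1) (hsum : ∑ x ∈ s, σ x = 0) (f : α → α)
    (hf_mem : ∀ x ∈ s, f x ∈ s) (hf_invol : ∀ x ∈ s, f (f x) = x) (hf_ne : ∀ x ∈ s, f x ≠ x)
    (hσf : ∀ x ∈ s, σ (f x) = σ x) : 4 ∣ s.card := by
  have hcard : (s.card : ℤ) = ∑ x ∈ s, (1 + σ x) := by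
    simp [sum_add_distrib, hsum]
  have hpairs : ∑ x ∈ s, ((1 + σ x : ℤ) : ZMod 4) = 0 := by
    refine sum_involution (fun x _ => f x) (fun x hx => ?_) (fun x hx _ => hf_ne x hx)
      hf_mem hf_invol
    rw [hσf x hx]
    rcases hσ x hx with h | h <;> rw [h] <;> decide
  have : ((s.card : ℤ) : ZMod 4) = 0 := by
    rw [hcard]; push_cast at hpairs ⊢; exact hpairs
  exact_mod_cast (ZMod.intCast_zmod_eq_zero_iff_dvd _ 4).mp this

theorem eq_neg_of_ne_of_pm_one {x y : ℤ} (hx : x = 1 ∨ x = -1) (hy : y = 1 ∨ y = -1)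
    (h : x ≠ y) : y = -x := by
  rcases hx with rfl | rfl <;> rcases hy with rfl | rfl <;> simp_all

theorem sub_mul_sub_eq_ite_of_pm_one {x y z w : ℤ} (hx : x = 1 ∨ x = -1) (hy : y = 1 ∨ y = -1)
    (hz : z = 1 ∨ z = -1) (hw : w = 1 ∨ w = -1) :
    (x - y) * (z - w) = if x ≠ y ∧ z ≠ w then 4 * (x * z) else 0 := by
  rcases hx with rfl | rfl <;> rcases hy with rfl | rfl <;>
    rcases hz with rfl | rfl <;> rcases hw with rfl | rfl <;> norm_num

theorem four_dvd_card_odd_block_pairs {G : Type*} [AddCommGroup G] [Fintype G] (a : G → ℤ)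
    (ha : ∀ i, a i = 1 ∨ a i = -1) (hR : ∀ s ≠ 0, autocorrelation a s = 0)
    {c : G} (hc : c + c = 0) (hc0 : c ≠ 0) {t : G} (ht : t ≠ 0) (htc : t ≠ c) :
    4 ∣ (univ.filter fun i => a i ≠ a (i + c) ∧ a (i + t) ≠ a (i + t + c)).card := by
  set O := univ.filter fun i => a i ≠ a (i + c) ∧ a (i + t) ≠ a (i + t + c)
  have hcc : ∀ x, x + c + c = x := fun x => by rw [add_assoc, hc, add_zero]
  have hdiff : autocorrelation (fun i => a i - a (i + c)) t = 0 := by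
    have htc' : t + c ≠ 0 := fun h => htc (by simpa [hcc] using congrArg (· + c) h)
    rw [autocorrelation_sub_shift, hR t ht, hR _ htc', hR _ (sub_ne_zero.mpr htc)]
    ring
  have hsum : ∑ i ∈ O, a i * a (i + t) = 0 := by
    have : autocorrelation (fun i => a i - a (i + c)) t = 4 * ∑ i ∈ O, a i * a (i + t) := by
      rw [mul_sum, sum_filter]
      refine sum_congr rfl fun i _ => ?_
      rw [sub_mul_sub_eq_ite_of_pm_one (ha _) (ha _) (ha _) (ha _)]
    omega
  refine four_dvd_card_of_sum_eq_zero_of_involution (fun i => a i * a (i + t)) ?_ hsum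
    (· + c) ?_ (fun i _ => hcc i) (fun i _ h => hc0 (by simpa using h)) ?_
  · intro i _
    rcases ha i with h | h <;> rcases ha (i + t) with h' | h' <;> simp [h, h']
  · intro i hi
    obtain ⟨h₁, h₂⟩ := (mem_filter.mp hi).2
    refine mem_filter.mpr ⟨mem_univ _, ?_, ?_⟩
    · rw [hcc]; exact h₁.symm
    · rw [add_right_comm, hcc]; exact h₂.symm
  · intro i hi
    obtain ⟨h₁, h₂⟩ := (mem_filter.mp hi).2
    rw [add_right_comm, eq_neg_of_ne_of_pm_one (ha _) (ha _) h₁,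
      eq_neg_of_ne_of_pm_one (ha _) (ha _) h₂, neg_mul_neg]

/-- For a circulant Hadamard matrix of order `4n`, every difference `t ≠ 0, 2n`
between odd blocks occurs a number of times divisible by `4` (counted over
`ZMod (4n)`, where each block is represented twice). -/
theorem circulant_hadamard_odd_block_differences
    (n : ℕ) [NeZero n] (a : ZMod (4 * n) → ℤ)
    (ha : ∀ i, a i = 1 ∨ a i = -1)
    (H : Matrix (ZMod (4 * n)) (ZMod (4 * n)) ℤ)
    (hH : ∀ i j, H i j = a (j - i))
    (hHad : H * H.transpose = ((4 * n : ℕ) : ℤ) • 1) :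
    ∀ t : ZMod (4 * n), t ≠ 0 → t ≠ (2 * n : ZMod (4 * n)) →
      4 ∣ (Finset.univ.filter fun i : ZMod (4 * n) =>
        a i ≠ a (i + 2 * n) ∧ a (i + t) ≠ a (i + t + 2 * n)).card := by
  intro t ht ht2
  have hc : (2 * n : ZMod (4 * n)) + 2 * n = 0 := by
    have h := ZMod.natCast_self (4 * n)
    push_cast at h
    linear_combination h
  have hc0 : (2 * n : ZMod (4 * n)) ≠ 0 := by
    have hn := NeZero.pos n
    intro h
    have hdvd := (ZMod.natCast_eq_zero_iff (2 * n) (4 * n)).mp (by exact_mod_cast h)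
    have := Nat.le_of_dvd (by omega) hdvd
    omega
  exact four_dvd_card_odd_block_pairs a ha
    (fun s hs => autocorrelation_eq_zero_of_mul_transpose_eq_smul_one a H hH _ hHad hs)
    hc hc0 ht ht2
end

section
/- For every natural number t there exists a Hadamard group matrix over the abelian group C₂ × C₈ × C₄ᵗ: there exists f : ZMod 2 × ZMod 8 × (Fin t → ZMod 4) → ℤ taking only the values 1 and −1 such that the matrix M indexed by this group with M g h = f (h − g) satisfies M * Mᵀ = ((16 * 4 ^ t : ℕ) : ℤ) • 1. -/
/-!
If `f` is a `±1` function on a finite abelian group `G` whose periodic autocorrelation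
`d ↦ ∑ k, f k * f (k + d)` vanishes off `0`, then the group matrix `M` of `f` satisfies
`M * Mᵀ = |G| • 1`, since the entry `(g, h)` of `M * Mᵀ` is the autocorrelation at `g - h`.
Perfect autocorrelation is preserved by taking `(x, y) ↦ f₁ x * f₂ y` on `G₁ × G₂` and
`c ↦ ∏ i, f (c i)` on `Gᵗ`, because the autocorrelation factors accordingly. So the theorem
follows from one perfect `±1` function on `C₂ × C₈` and one on `C₄`, both checked by computation.
-/

open Matrix Finset

section Autocorrelation

variable {G H R : Type*} [AddCommGroup G] [Fintype G] [AddCommGroup H] [Fintype H] [CommRing R]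

def autocorr (f : G → R) (d : G) : R := ∑ k, f k * f (k + d)

def groupMatrix (f : G → R) : Matrix G G R := of fun g h => f (h - g)

lemma groupMatrix_mul_transpose_apply (f : G → R) (g h : G) :
    (groupMatrix f * (groupMatrix f)ᵀ) g h = autocorr f (g - h) := by
  simp only [mul_apply, transpose_apply, groupMatrix, of_apply, autocorr]
  exact Fintype.sum_equiv (Equiv.subRight g) _ _ fun k => by simp

lemma autocorr_comp_addEquiv (f : H → R) (e : G ≃+ H) (d : G) :
    autocorr (f ∘ e) d = autocorr f (e d) :=
  Fintype.sum_equiv e.toEquiv _ _ fun k => by simp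

lemma autocorr_prod (f₁ : G → R) (f₂ : H → R) (d : G × H) :
    autocorr (fun p : G × H => f₁ p.1 * f₂ p.2) d = autocorr f₁ d.1 * autocorr f₂ d.2 := by
  simp only [autocorr, Fintype.sum_prod_type, sum_mul_sum, Prod.fst_add, Prod.snd_add]
  exact sum_congr rfl fun _ _ => sum_congr rfl fun _ _ => by ring

lemma autocorr_pi {ι : Type*} [Fintype ι] [DecidableEq ι] (f : G → R) (d : ι → G) :
    autocorr (fun c : ι → G => ∏ i, f (c i)) d = ∏ i, autocorr f (d i) := by
  simp only [autocorr, prod_univ_sum, Fintype.piFinset_univ, Pi.add_apply, prod_mul_distrib]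

variable [DecidableEq G] [DecidableEq H]

def HasPerfectAutocorr (f : G → R) (n : R) : Prop :=
  ∀ d, autocorr f d = if d = 0 then n else 0

namespace HasPerfectAutocorr

lemma groupMatrix_mul_transpose {f : G → R} {n : R} (hf : HasPerfectAutocorr f n) :
    groupMatrix f * (groupMatrix f)ᵀ = n • 1 := by
  ext g h
  simp [groupMatrix_mul_transpose_apply, hf (g - h), one_apply, sub_eq_zero]

lemma comp_addEquiv {f : H → R} {n : R} (hf : HasPerfectAutocorr f n) (e : G ≃+ H) :
    HasPerfectAutocorr (f ∘ e) n := fun d => by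
  simp [autocorr_comp_addEquiv, hf (e d)]

lemma prod {f₁ : G → R} {f₂ : H → R} {n₁ n₂ : R} (h₁ : HasPerfectAutocorr f₁ n₁)
    (h₂ : HasPerfectAutocorr f₂ n₂) :
    HasPerfectAutocorr (fun p : G × H => f₁ p.1 * f₂ p.2) (n₁ * n₂) := fun d => by
  rw [autocorr_prod, h₁, h₂]
  split_ifs <;> simp_all [Prod.ext_iff]

lemma pi {ι : Type*} [Fintype ι] [DecidableEq ι] {f : G → R} {n : R}
    (hf : HasPerfectAutocorr f n) :
    HasPerfectAutocorr (fun c : ι → G => ∏ i, f (c i)) (n ^ Fintype.card ι) := fun d => by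
  simp [autocorr_pi, fun i => hf (d i), prod_ite_zero, funext_iff]

end HasPerfectAutocorr

end Autocorrelation

def perfectC2C8 : ZMod 2 × ZMod 8 → ℤ := fun p =>
  if p.1 = 0 then (if p.2 = 6 ∨ p.2 = 7 then -1 else 1)
  else (if p.2 = 1 ∨ p.2 = 3 ∨ p.2 = 5 ∨ p.2 = 6 then -1 else 1)

def perfectC4 : ZMod 4 → ℤ := fun x => if x = 3 then -1 else 1

lemma hasPerfectAutocorr_perfectC2C8 : HasPerfectAutocorr perfectC2C8 16 := by
  unfold HasPerfectAutocorr autocorr; decide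

lemma hasPerfectAutocorr_perfectC4 : HasPerfectAutocorr perfectC4 4 := by
  unfold HasPerfectAutocorr autocorr; decide

lemma isUnit_perfectC2C8 (p : ZMod 2 × ZMod 8) : IsUnit (perfectC2C8 p) := by
  unfold perfectC2C8; split_ifs <;> simp

lemma isUnit_perfectC4 (x : ZMod 4) : IsUnit (perfectC4 x) := by
  unfold perfectC4; split_ifs <;> simp

/-- For every `t` there exists a Hadamard group matrix over the abelian group
`C₂ × C₈ × C₄ᵗ`, of order `16 * 4 ^ t`. -/
theorem exists_hadamard_group_matrix_C2_C8_C4_pow (t : ℕ) :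
    ∃ f : ZMod 2 × ZMod 8 × (Fin t → ZMod 4) → ℤ, (∀ g, f g = 1 ∨ f g = -1) ∧
      ∃ M : Matrix (ZMod 2 × ZMod 8 × (Fin t → ZMod 4))
          (ZMod 2 × ZMod 8 × (Fin t → ZMod 4)) ℤ,
        (∀ g h, M g h = f (h - g)) ∧
          M * M.transpose = ((16 * 4 ^ t : ℕ) : ℤ) • 1 := by
  have hf := (hasPerfectAutocorr_perfectC2C8.prod hasPerfectAutocorr_perfectC4.pi).comp_addEquiv
    (AddEquiv.prodAssoc : (ZMod 2 × ZMod 8) × (Fin t → ZMod 4) ≃+ _).symm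
  rw [Fintype.card_fin] at hf
  refine ⟨_, fun g => Int.isUnit_iff.mp ?_, groupMatrix _, fun _ _ => rfl,
    by push_cast; exact hf.groupMatrix_mul_transpose⟩
  exact (isUnit_perfectC2C8 _).mul (IsUnit.prod_univ_iff.mpr fun _ => isUnit_perfectC4 _)
end
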